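/- arXiv:2102.11332 — 2 statements merged into one kernel-verified Lean document; each statement's English description precedes it below -/
import Mathlib

section
/- Let n be a positive integer, let φ be an entire function, and suppose there exist constants C > 0 and R_0 > 0 such that: (i) |φ(z) − e^{z^n}| ≤ C/|z| for all z with |z| ≥ R_0 and |arg z| < π/n, and (ii) |φ(z)| ≤ C/|z| for all z with |z| ≥ R_0 and π/n < arg z < 2π − π/n. For 1 ≤ j ≤ n define φ_j(z) = φ(e^{−2πij/n} z), let a_1, ..., a_n be entire functions each satisfying log|a_j(z)| = o(|z|^n) as |z| → ∞, and set f(z) = ∑_{j=1}^n φ_j(z) a_j(z) e^{−z^n}. Then f is entire, and for each j_0 ∈ {1, ..., n}, f(z) − a_{j_0}(z) → 0 as z → ∞ along the ray γ_{j_0} = {r e^{2πi j_0/n} : r > 0}. -/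
/-!
On the ray `γ_{j₀}` we have `z ^ n = r ^ n`, so `e^{-z^n} = e^{-r^n}`. The rotation by
`e^{-2πi(j₀+1)/n}` brings `z` to the positive real axis, where (i) makes the `j₀`-th summand equal
to `a_{j₀}(z)` up to `C |a_{j₀}(z)| e^{-r^n} / r`; for `j ≠ j₀` the rotated point has argument
`2π(j₀ - j)/n` modulo `2π`, outside the sector `|arg| ≤ π/n`, so by (ii) the summand is at most
`C |a_j(z)| e^{-r^n} / r`. Since `log |a_j| = o(|z|^n)`, eventually `|a_j(z)| ≤ e^{r^n/2}`, and all
these error terms tend to `0`.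
-/

open Real Filter Complex Asymptotics

theorem tendsto_norm_mul_exp_neg_of_isLittleO {α F : Type*} [SeminormedAddGroup F] {l : Filter α}
    {g : α → F} {h : α → ℝ} (hh : Tendsto h l atTop)
    (hg : (fun x => Real.log ‖g x‖) =o[l] h) :
    Tendsto (fun x => ‖g x‖ * rexp (-h x)) l (nhds 0) := by
  refine squeeze_zero' (.of_forall fun x => by positivity) ?_
    (Real.tendsto_exp_neg_atTop_nhds_zero.comp (hh.atTop_div_const two_pos))
  filter_upwards [hg.bound one_half_pos, hh.eventually_ge_atTop 0] with x hlog hx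
  rw [Real.norm_eq_abs, Real.norm_eq_abs, abs_of_nonneg hx] at hlog
  calc ‖g x‖ * rexp (-h x)
      ≤ rexp (Real.log ‖g x‖) * rexp (-h x) := by gcongr; exact Real.le_exp_log _
    _ ≤ rexp (h x / 2) * rexp (-h x) := by gcongr; linarith [le_abs_self (Real.log ‖g x‖)]
    _ = rexp (-(h x / 2)) := by rw [← Real.exp_add]; ring_nf

theorem norm_sum_sub_le_of_le {ι E : Type*} [Fintype ι] [DecidableEq ι] [SeminormedAddCommGroup E]
    {x : ι → E} {y : E} {b : ι → ℝ} (i : ι) (hi : ‖x i - y‖ ≤ b i)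
    (hb : ∀ j ≠ i, ‖x j‖ ≤ b j) : ‖∑ j, x j - y‖ ≤ ∑ j, b j := by
  rw [Fintype.sum_eq_add_sum_compl i x, Fintype.sum_eq_add_sum_compl i b, add_sub_right_comm]
  refine (norm_add_le _ _).trans (add_le_add hi ((norm_sum_le _ _).trans (Finset.sum_le_sum ?_)))
  intro j hj
  exact hb j (by simpa using hj)

/-- The point `r e^{2πik/n}` of the ray `γ_k`. -/
noncomputable def rayPoint (n : ℕ) (k : ℤ) (r : ℝ) : ℂ := r * cexp (2 * π * k / n * I)

section RayPoint

variable {n : ℕ} {k : ℤ} {r : ℝ}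

lemma rayPoint_eq_ofReal_mul_exp : rayPoint n k r = r * cexp (↑(2 * π * k / n) * I) := by
  simp [rayPoint]

lemma norm_rayPoint (hr : 0 ≤ r) : ‖rayPoint n k r‖ = r := by
  rw [rayPoint_eq_ofReal_mul_exp, norm_mul, norm_exp_ofReal_mul_I, norm_real, mul_one,
    Real.norm_of_nonneg hr]

lemma rayPoint_pow (hn : n ≠ 0) : rayPoint n k r ^ n = (r : ℂ) ^ n := by
  rw [rayPoint, mul_pow, ← Complex.exp_nat_mul]
  convert mul_one _
  convert exp_int_mul_two_pi_mul_I k using 2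
  field_simp

lemma exp_neg_mul_rayPoint (m : ℤ) :
    cexp (-(2 * π * m / n) * I) * rayPoint n k r = rayPoint n (k - m) r := by
  rw [rayPoint, rayPoint, mul_left_comm, ← Complex.exp_add]
  push_cast
  ring_nf

lemma rayPoint_zero : rayPoint n 0 r = r := by simp [rayPoint]

lemma tendsto_rayPoint_comap_norm : Tendsto (rayPoint n k) atTop (comap (‖·‖) atTop) := by
  refine tendsto_comap_iff.mpr (tendsto_id.congr' ?_)
  filter_upwards [eventually_ge_atTop 0] with r hr
  exact (norm_rayPoint hr).symm

lemma pi_div_lt_abs_arg_rayPoint (hn : 0 < n) (hk : ¬ (n : ℤ) ∣ k) (hr : 0 < r) :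
    π / n < |arg (rayPoint n k r)| := by
  set m := toIocDiv two_pi_pos (-π) (2 * π * k / n)
  have harg : arg (rayPoint n k r) = 2 * π * ((k - m * n : ℤ) : ℝ) / n := by
    rw [rayPoint_eq_ofReal_mul_exp, arg_real_mul _ hr, arg_exp_mul_I, ← self_sub_toIocDiv_zsmul]
    push_cast
    field_simp
    ring
  by_contra! hle
  have hn' : (0 : ℝ) < n := by exact_mod_cast hn
  have hlt : |((k - m * n : ℤ) : ℝ)| < 1 := by
    rw [harg, abs_div, abs_mul, abs_of_pos two_pi_pos, abs_of_pos hn',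
      div_le_div_iff_of_pos_right hn'] at hle
    nlinarith [pi_pos]
  have hzero : k - m * n = 0 := Int.abs_lt_one_iff.mp (by exact_mod_cast hlt)
  exact hk ⟨m, by linarith⟩

end RayPoint

lemma Fin.intCast_dvd_val_sub_val_iff {n : ℕ} {i j : Fin n} :
    (n : ℤ) ∣ (i.1 - j.1 : ℤ) ↔ i = j := by
  refine ⟨fun h => Fin.ext ?_, fun h => by simp [h]⟩
  have := Int.eq_zero_of_abs_lt_dvd h (by rw [abs_lt]; omega)
  omega

section

variable {n : ℕ} {φ : ℂ → ℂ} {C R₀ : ℝ} {a : Fin n → ℂ → ℂ}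

theorem norm_sum_sub_le_of_eq_rayPoint
    (h1 : ∀ z : ℂ, R₀ ≤ ‖z‖ → |arg z| < π / n → ‖φ z - cexp (z ^ n)‖ ≤ C / ‖z‖)
    (h2 : ∀ z : ℂ, R₀ ≤ ‖z‖ → π / n < |arg z| → ‖φ z‖ ≤ C / ‖z‖)
    (j₀ : Fin n) {r : ℝ} (hr : 0 < r) (hR₀ : R₀ ≤ r) {z : ℂ} (hz : z = rayPoint n (j₀.1 + 1) r) :
    ‖∑ j : Fin n, φ (cexp (-(2 * π * (j.1 + 1) / n) * I) * z) * a j z * cexp (-z ^ n) - a j₀ z‖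
      ≤ ∑ j, C / ‖z‖ * (‖a j z‖ * rexp (-‖z‖ ^ n)) := by
  have hn := j₀.pos
  have hnorm : ‖z‖ = r := hz ▸ norm_rayPoint hr.le
  have hpow : z ^ n = (r : ℂ) ^ n := hz ▸ rayPoint_pow hn.ne'
  have hexp : ‖cexp (-z ^ n)‖ = rexp (-‖z‖ ^ n) := by
    rw [hpow, hnorm, ← ofReal_pow, ← ofReal_neg, norm_exp_ofReal]
  have hrot (j : Fin n) :
      cexp (-(2 * π * (j.1 + 1) / n) * I) * z = rayPoint n (j₀.1 - j.1) r := by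
    simpa [hz] using exp_neg_mul_rayPoint (n := n) (k := j₀.1 + 1) (r := r) (j.1 + 1)
  apply norm_sum_sub_le_of_le j₀
  · have hφ : ‖φ r - cexp (r ^ n)‖ ≤ C / r := by
      simpa [abs_of_pos hr, arg_ofReal_of_nonneg hr.le, pi_pos, hn] using
        h1 r (by simpa [abs_of_pos hr] using hR₀)
    rw [hrot, sub_self, rayPoint_zero]
    calc ‖φ r * a j₀ z * cexp (-z ^ n) - a j₀ z‖
        = ‖(φ r - cexp (z ^ n)) * a j₀ z * cexp (-z ^ n)‖ := by
          rw [sub_mul, sub_mul, mul_right_comm (cexp _), ← Complex.exp_add,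
            add_neg_cancel, Complex.exp_zero, one_mul]
      _ ≤ C / ‖z‖ * (‖a j₀ z‖ * rexp (-‖z‖ ^ n)) := by
        rw [norm_mul, norm_mul, hexp, hpow, hnorm, mul_assoc]
        gcongr
  · intro j hj
    have hk : ¬ (n : ℤ) ∣ (j₀.1 - j.1 : ℤ) := Fin.intCast_dvd_val_sub_val_iff.not.mpr (Ne.symm hj)
    rw [hrot, norm_mul, norm_mul, hexp, mul_assoc, hnorm]
    gcongr
    simpa [norm_rayPoint hr.le] using
      h2 _ (by rwa [norm_rayPoint hr.le]) (pi_div_lt_abs_arg_rayPoint hn hk hr)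

end

theorem stmt_13_general (n : ℕ) (φ : ℂ → ℂ) (hφ : Differentiable ℂ φ)
    (C R₀ : ℝ)
    (h1 : ∀ z : ℂ, R₀ ≤ ‖z‖ → |Complex.arg z| < π / n →
      ‖φ z - Complex.exp (z ^ n)‖ ≤ C / ‖z‖)
    (h2 : ∀ z : ℂ, R₀ ≤ ‖z‖ → π / n < |Complex.arg z| →
      ‖φ z‖ ≤ C / ‖z‖)
    (a : Fin n → ℂ → ℂ) (ha : ∀ j, Differentiable ℂ (a j))
    (hao : ∀ j : Fin n,
      (fun z : ℂ => Real.log (‖a j z‖)) =o[Filter.comap (fun z : ℂ => ‖z‖) Filter.atTop]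
        (fun z : ℂ => ‖z‖ ^ n))
    (f : ℂ → ℂ)
    (hf : f = fun z => ∑ j : Fin n,
      φ (Complex.exp (-(2 * π * (j.1 + 1) / n) * Complex.I) * z) * a j z *
        Complex.exp (-z ^ n)) :
    Differentiable ℂ f ∧
      ∀ j₀ : Fin n,
        Tendsto (fun r : ℝ =>
            f ((r : ℂ) * Complex.exp ((2 * π * (j₀.1 + 1) / n) * Complex.I)) -
              a j₀ ((r : ℂ) * Complex.exp ((2 * π * (j₀.1 + 1) / n) * Complex.I)))
          atTop (nhds 0) := by
  subst hf
  refine ⟨by fun_prop, fun j₀ => ?_⟩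
  have hray (r : ℝ) : (r : ℂ) * cexp (2 * π * (j₀.1 + 1) / n * I) = rayPoint n (j₀.1 + 1) r := by
    simp [rayPoint]
  have hbound : Tendsto (fun z : ℂ => ∑ j, C / ‖z‖ * (‖a j z‖ * rexp (-‖z‖ ^ n)))
      (comap (‖·‖) atTop) (nhds 0) := by
    have hpow : Tendsto (fun z : ℂ => ‖z‖ ^ n) (comap (‖·‖) atTop) atTop :=
      (tendsto_pow_atTop j₀.pos.ne').comp tendsto_comap
    simpa using tendsto_finsetSum Finset.univ fun j _ =>
      (tendsto_const_nhds.div_atTop tendsto_comap).mul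
        (tendsto_norm_mul_exp_neg_of_isLittleO hpow (hao j))
  simp only [hray]
  rw [tendsto_zero_iff_norm_tendsto_zero]
  refine squeeze_zero' (.of_forall fun _ => norm_nonneg _) ?_
    (hbound.comp (tendsto_rayPoint_comap_norm (n := n) (k := j₀.1 + 1)))
  filter_upwards [eventually_gt_atTop 0, eventually_ge_atTop R₀] with r hr hR₀
  exact norm_sum_sub_le_of_eq_rayPoint h1 h2 j₀ hr hR₀ rfl

theorem stmt_13 (n : ℕ) (hn : 0 < n) (φ : ℂ → ℂ) (hφ : Differentiable ℂ φ)
    (C R₀ : ℝ) (hC : 0 < C) (hR₀ : 0 < R₀)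
    (h1 : ∀ z : ℂ, R₀ ≤ ‖z‖ → |Complex.arg z| < π / n →
      ‖φ z - Complex.exp (z ^ n)‖ ≤ C / ‖z‖)
    (h2 : ∀ z : ℂ, R₀ ≤ ‖z‖ → π / n < |Complex.arg z| →
      ‖φ z‖ ≤ C / ‖z‖)
    (a : Fin n → ℂ → ℂ) (ha : ∀ j, Differentiable ℂ (a j))
    (hao : ∀ j : Fin n,
      (fun z : ℂ => Real.log (‖a j z‖)) =o[Filter.comap (fun z : ℂ => ‖z‖) Filter.atTop]
        (fun z : ℂ => ‖z‖ ^ n))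
    (f : ℂ → ℂ)
    (hf : f = fun z => ∑ j : Fin n,
      φ (Complex.exp (-(2 * π * (j.1 + 1) / n) * Complex.I) * z) * a j z *
        Complex.exp (-z ^ n)) :
    Differentiable ℂ f ∧
      ∀ j₀ : Fin n,
        Tendsto (fun r : ℝ =>
            f ((r : ℂ) * Complex.exp ((2 * π * (j₀.1 + 1) / n) * Complex.I)) -
              a j₀ ((r : ℂ) * Complex.exp ((2 * π * (j₀.1 + 1) / n) * Complex.I)))
          atTop (nhds 0) :=
  stmt_13_general n φ hφ C R₀ h1 h2 a ha hao f hf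
end

section
/- Let n be a positive integer, d_n = ∫_0^∞ t e^{−t^n} dt, and let Γ be the contour as in Lemma le-2 (two rays at angles ±π/n). For z ∉ Γ with |z| = R, let Γ_1 be the portion of Γ with |w| ≤ R/2 and Γ_3 the portion with |w| ≥ 2R. Then |(1/(2πi)) ∫_{Γ_1} w e^{w^n} / (z(w − z)) dw| ≤ (2/(π R²)) d_n and |(1/(2πi)) ∫_{Γ_3} w e^{w^n} / (z(w − z)) dw| ≤ (1/(π R²)) d_n. -/
/-! Along both rays `w = t e^{±iπ/n}` one has `w^n = -t^n`, so `|w e^{w^n}| = t e^{-t^n}` and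
everything reduces to bounding `1 / (|z| |w - z|)`. For `|w| ≤ R/2` and for `|w| ≥ 2R` the reverse
triangle inequality gives `|w - z| ≥ R/2`, resp. `|w - z| ≥ R`; integrating `t e^{-t^n}` over each
ray gives at most `d_n`, and the two rays together with the factor `1/(2π)` give the claim. -/

open Real MeasureTheory Complex Set

lemma integrableOn_mul_exp_neg_pow {n : ℕ} (hn : 0 < n) :
    IntegrableOn (fun t : ℝ => t * Real.exp (-t ^ n)) (Ioi 0) := by
  refine (integrableOn_rpow_mul_exp_neg_rpow (s := 1) (p := n) (by norm_num)
    (by exact_mod_cast hn)).congr_fun (fun t _ => ?_) measurableSet_Ioi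
  simp only [Real.rpow_one, Real.rpow_natCast]

lemma norm_setIntegral_le_mul_setIntegral_of_subset {α E : Type*} [MeasurableSpace α]
    [NormedAddCommGroup E] [NormedSpace ℝ E] {μ : Measure α} {f : α → E} {g : α → ℝ}
    {s T : Set α} (hs : MeasurableSet s) (hT : MeasurableSet T) (hsT : s ⊆ T)
    (hg : IntegrableOn g T μ) (hg0 : ∀ x ∈ T, 0 ≤ g x) {c : ℝ} (hc : 0 ≤ c)
    (hfg : ∀ x ∈ s, ‖f x‖ ≤ c * g x) :
    ‖∫ x in s, f x ∂μ‖ ≤ c * ∫ x in T, g x ∂μ :=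
  calc ‖∫ x in s, f x ∂μ‖ ≤ ∫ x in s, c * g x ∂μ :=
        norm_integral_le_of_norm_le ((hg.mono_set hsT).const_mul c)
          ((ae_restrict_iff' hs).2 (.of_forall hfg))
    _ = c * ∫ x in s, g x ∂μ := integral_const_mul c g
    _ ≤ c * ∫ x in T, g x ∂μ := by
        gcongr
        exact (ae_restrict_iff' hT).2 (.of_forall hg0)

lemma norm_one_div_two_pi_I_mul_sub_le {a b : ℂ} {M : ℝ} (ha : ‖a‖ ≤ M) (hb : ‖b‖ ≤ M) :
    ‖1 / (2 * (π : ℂ) * I) * (a - b)‖ ≤ M / π := by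
  have hnorm : ‖1 / (2 * (π : ℂ) * I)‖ = 1 / (2 * π) := by
    simp [abs_of_pos Real.pi_pos]
  rw [norm_mul, hnorm]
  calc 1 / (2 * π) * ‖a - b‖ ≤ 1 / (2 * π) * (M + M) := by
        gcongr
        exact (norm_sub_le a b).trans (add_le_add ha hb)
    _ = M / π := by field_simp; ring

lemma cexp_pi_div_mul_I_pow {n : ℕ} (hn : n ≠ 0) :
    Complex.exp ((π / n : ℝ) * I) ^ n = -1 := by
  rw [← Complex.exp_nat_mul, ← Complex.exp_pi_mul_I]
  congr 1
  push_cast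
  field_simp

lemma cexp_neg_pi_div_mul_I_pow {n : ℕ} (hn : n ≠ 0) :
    Complex.exp (-(π / n : ℝ) * I) ^ n = -1 := by
  rw [neg_mul, Complex.exp_neg, inv_pow, cexp_pi_div_mul_I_pow hn, inv_neg, inv_one]

/-- The integrand `w e^{w^n} / (z (w - z))` pulled back along the ray `w = t u`; the last factor
is `dw/dt`. -/
noncomputable def rayIntegrand (n : ℕ) (z u : ℂ) (t : ℝ) : ℂ :=
  ((t : ℂ) * u) * Complex.exp (((t : ℂ) * u) ^ n) / (z * ((t : ℂ) * u - z)) * u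

section rayIntegrand

variable {n : ℕ} {z u : ℂ}

lemma norm_rayIntegrand (hu : ‖u‖ = 1) (hun : u ^ n = -1) {t : ℝ} (ht : 0 ≤ t) :
    ‖rayIntegrand n z u t‖ = t * Real.exp (-t ^ n) / (‖z‖ * ‖(t : ℂ) * u - z‖) := by
  have hpow : ((t : ℂ) * u) ^ n = ((-t ^ n : ℝ) : ℂ) := by
    rw [mul_pow, hun]
    push_cast
    ring
  rw [rayIntegrand, hpow]
  simp only [norm_mul, norm_div, Complex.norm_exp_ofReal, hu, Complex.norm_real,
    Real.norm_eq_abs, abs_of_nonneg ht]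
  ring

lemma abs_sub_norm_le_norm_ofReal_mul_sub (hu : ‖u‖ = 1) {t : ℝ} (ht : 0 ≤ t) :
    |t - ‖z‖| ≤ ‖(t : ℂ) * u - z‖ := by
  simpa [hu, abs_of_nonneg ht] using abs_norm_sub_norm_le ((t : ℂ) * u) z

lemma norm_rayIntegrand_le (hu : ‖u‖ = 1) (hun : u ^ n = -1) (hz : z ≠ 0) {t ρ : ℝ}
    (ht : 0 ≤ t) (hρ : 0 < ρ) (hρt : ρ ≤ ‖(t : ℂ) * u - z‖) :
    ‖rayIntegrand n z u t‖ ≤ 1 / (‖z‖ * ρ) * (t * Real.exp (-t ^ n)) := by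
  rw [norm_rayIntegrand hu hun ht, one_div_mul_eq_div]
  have hz' := norm_pos_iff.2 hz
  exact div_le_div_of_nonneg_left (by positivity) (by positivity) (by gcongr)

lemma norm_rayIntegrand_le_of_le_half (hu : ‖u‖ = 1) (hun : u ^ n = -1) (hz : z ≠ 0) {t : ℝ}
    (ht : t ∈ Ioc 0 (‖z‖ / 2)) :
    ‖rayIntegrand n z u t‖ ≤ 2 / ‖z‖ ^ 2 * (t * Real.exp (-t ^ n)) := by
  have hz' := norm_pos_iff.2 hz
  have hdist := abs_sub_norm_le_norm_ofReal_mul_sub (z := z) hu ht.1.le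
  rw [abs_sub_comm, abs_of_nonneg (by linarith [ht.2])] at hdist
  refine (norm_rayIntegrand_le hu hun hz ht.1.le (half_pos hz') (by linarith [ht.2])).trans_eq ?_
  field_simp

lemma norm_rayIntegrand_le_of_two_mul_le (hu : ‖u‖ = 1) (hun : u ^ n = -1) (hz : z ≠ 0)
    {t : ℝ} (ht : 2 * ‖z‖ ≤ t) :
    ‖rayIntegrand n z u t‖ ≤ 1 / ‖z‖ ^ 2 * (t * Real.exp (-t ^ n)) := by
  have hz' := norm_pos_iff.2 hz
  have hdist := abs_sub_norm_le_norm_ofReal_mul_sub (z := z) hu (by linarith : 0 ≤ t)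
  rw [abs_of_nonneg (by linarith)] at hdist
  refine (norm_rayIntegrand_le hu hun hz (by linarith) hz' (by linarith)).trans_eq ?_
  ring

lemma norm_setIntegral_rayIntegrand_le (hn : 0 < n) {s : Set ℝ} (hs : MeasurableSet s)
    (hs0 : s ⊆ Ioi 0) {c : ℝ} (hc : 0 ≤ c)
    (hbound : ∀ t ∈ s, ‖rayIntegrand n z u t‖ ≤ c * (t * Real.exp (-t ^ n))) :
    ‖∫ t in s, rayIntegrand n z u t‖ ≤ c * ∫ t in Ioi 0, t * Real.exp (-t ^ n) :=
  norm_setIntegral_le_mul_setIntegral_of_subset hs measurableSet_Ioi hs0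
    (integrableOn_mul_exp_neg_pow hn) (fun t ht => by have : 0 < t := ht; positivity) hc hbound

lemma norm_setIntegral_rayIntegrand_Ioc_le (hn : 0 < n) (hu : ‖u‖ = 1) (hun : u ^ n = -1)
    (hz : z ≠ 0) :
    ‖∫ t in Ioc 0 (‖z‖ / 2), rayIntegrand n z u t‖ ≤
      2 / ‖z‖ ^ 2 * ∫ t in Ioi 0, t * Real.exp (-t ^ n) :=
  norm_setIntegral_rayIntegrand_le hn measurableSet_Ioc Ioc_subset_Ioi_self (by positivity)
    fun _ ht => norm_rayIntegrand_le_of_le_half hu hun hz ht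

lemma norm_setIntegral_rayIntegrand_Ici_le (hn : 0 < n) (hu : ‖u‖ = 1) (hun : u ^ n = -1)
    (hz : z ≠ 0) :
    ‖∫ t in Ici (2 * ‖z‖), rayIntegrand n z u t‖ ≤
      1 / ‖z‖ ^ 2 * ∫ t in Ioi 0, t * Real.exp (-t ^ n) := by
  have hz' := norm_pos_iff.2 hz
  refine norm_setIntegral_rayIntegrand_le hn measurableSet_Ici
    (fun t (ht : 2 * ‖z‖ ≤ t) => show 0 < t by linarith) (by positivity)
    fun _ ht => norm_rayIntegrand_le_of_two_mul_le hu hun hz ht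

end rayIntegrand

theorem stmt_15 (n : ℕ) (hn : 0 < n)
    (d : ℝ) (hd : d = ∫ t in Set.Ioi (0:ℝ), t * Real.exp (-t ^ n))
    (z : ℂ) (R : ℝ) (hzR : ‖z‖ = R)
    (hz : ∀ t : ℝ, 0 ≤ t →
      z ≠ (t : ℂ) * Complex.exp ((π / n : ℝ) * Complex.I) ∧
      z ≠ (t : ℂ) * Complex.exp (-(π / n : ℝ) * Complex.I))
    (F G : ℝ → ℂ)
    (hF : F = fun (t : ℝ) => ((t : ℂ) * Complex.exp ((π / n : ℝ) * Complex.I)) *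
        Complex.exp (((t : ℂ) * Complex.exp ((π / n : ℝ) * Complex.I)) ^ n) /
        (z * ((t : ℂ) * Complex.exp ((π / n : ℝ) * Complex.I) - z)) *
        Complex.exp ((π / n : ℝ) * Complex.I))
    (hG : G = fun (t : ℝ) => ((t : ℂ) * Complex.exp (-(π / n : ℝ) * Complex.I)) *
        Complex.exp (((t : ℂ) * Complex.exp (-(π / n : ℝ) * Complex.I)) ^ n) /
        (z * ((t : ℂ) * Complex.exp (-(π / n : ℝ) * Complex.I) - z)) *
        Complex.exp (-(π / n : ℝ) * Complex.I)) :
    ‖(1 / (2 * (π : ℂ) * Complex.I)) *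
        ((∫ t in Set.Ioc (0:ℝ) (R / 2), F t) - ∫ t in Set.Ioc (0:ℝ) (R / 2), G t)‖ ≤
      2 / (π * R ^ 2) * d ∧
    ‖(1 / (2 * (π : ℂ) * Complex.I)) *
        ((∫ t in Set.Ici (2 * R), F t) - ∫ t in Set.Ici (2 * R), G t)‖ ≤
      1 / (π * R ^ 2) * d := by
  have hz0 : z ≠ 0 := fun h => (hz 0 le_rfl).1 (by simp [h])
  have hn0 : n ≠ 0 := hn.ne'
  have hF' : F = rayIntegrand n z (Complex.exp ((π / n : ℝ) * I)) := hF
  have hG' : G = rayIntegrand n z (Complex.exp (-(π / n : ℝ) * I)) := hG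
  have hnorm₁ : ‖Complex.exp ((π / n : ℝ) * I)‖ = 1 := norm_exp_ofReal_mul_I _
  have hnorm₂ : ‖Complex.exp (-(π / n : ℝ) * I)‖ = 1 := by
    simpa using norm_exp_ofReal_mul_I (-(π / n))
  subst hzR hd hF' hG'
  constructor
  · calc _ ≤ 2 / ‖z‖ ^ 2 * (∫ t in Ioi 0, t * Real.exp (-t ^ n)) / π :=
          norm_one_div_two_pi_I_mul_sub_le
            (norm_setIntegral_rayIntegrand_Ioc_le hn hnorm₁ (cexp_pi_div_mul_I_pow hn0) hz0)
            (norm_setIntegral_rayIntegrand_Ioc_le hn hnorm₂ (cexp_neg_pi_div_mul_I_pow hn0) hz0)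
      _ = _ := by field_simp
  · calc _ ≤ 1 / ‖z‖ ^ 2 * (∫ t in Ioi 0, t * Real.exp (-t ^ n)) / π :=
          norm_one_div_two_pi_I_mul_sub_le
            (norm_setIntegral_rayIntegrand_Ici_le hn hnorm₁ (cexp_pi_div_mul_I_pow hn0) hz0)
            (norm_setIntegral_rayIntegrand_Ici_le hn hnorm₂ (cexp_neg_pi_div_mul_I_pow hn0) hz0)
      _ = _ := by field_simp
end
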